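/- arXiv:1209.6143 — 3 statements merged into one kernel-verified Lean document; each statement's English description precedes it below -/
import Mathlib

section
/- Let S be a nonempty set of trajectories, K closed, φ the truncated target penalization and ϕ the truncated constraint penalization (ϕ(z) ≤ 0 iff z ∈ K, φ(z) ≤ 0 iff z ∈ X₀). Define v₀ = inf over trajectories y ∈ S with y(θ) ∈ K for all θ ∈ [0,s] of φ(y(0)) (with inf ∅ = +∞), and v = inf over all y ∈ S of max(φ(y(0)), max_{θ∈[0,s]} ϕ(y(θ))). If the infimum defining v is attained, then v ≤ 0 ⟺ v₀ ≤ 0. -/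
open Set

/-- The state-constrained value `v₀` and the penalized supremum-cost value `v`
(both as extended reals, so that `inf ∅ = +∞`) have the same negative region,
provided the infimum defining `v` is attained. -/
theorem same_negative_region {d : ℕ}
    (S : Set (ℝ → EuclideanSpace ℝ (Fin d))) (hS : S.Nonempty)
    (K X₀ : Set (EuclideanSpace ℝ (Fin d))) (hK : IsClosed K)
    (φ ϕ : EuclideanSpace ℝ (Fin d) → ℝ)
    (hϕK : ∀ z, ϕ z ≤ 0 ↔ z ∈ K) (hφX₀ : ∀ z, φ z ≤ 0 ↔ z ∈ X₀)
    (s : ℝ) (hs : 0 ≤ s)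
    (hcont : ∀ y ∈ S, ContinuousOn y (Icc 0 s)) (hϕc : Continuous ϕ)
    (v₀ v : EReal)
    (hv₀ : v₀ = ⨅ (y : ℝ → EuclideanSpace ℝ (Fin d))
        (_ : y ∈ S ∧ ∀ θ ∈ Icc (0:ℝ) s, y θ ∈ K), ((φ (y 0) : ℝ) : EReal))
    (hv : v = ⨅ (y : ℝ → EuclideanSpace ℝ (Fin d)) (_ : y ∈ S),
        ((max (φ (y 0)) (⨆ θ : Icc (0:ℝ) s, ϕ (y θ)) : ℝ) : EReal))
    (hattained : ∃ y ∈ S,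
        ((max (φ (y 0)) (⨆ θ : Icc (0:ℝ) s, ϕ (y θ)) : ℝ) : EReal) = v) :
    v ≤ 0 ↔ v₀ ≤ 0 := by
  have hne : (Icc (0:ℝ) s).Nonempty := nonempty_Icc.2 hs
  haveI : Nonempty (Icc (0:ℝ) s) := hne.to_subtype
  constructor
  · intro hvle
    obtain ⟨y, hy, hyv⟩ := hattained
    have hmax : max (φ (y 0)) (⨆ θ : Icc (0:ℝ) s, ϕ (y θ)) ≤ 0 := by
      have := hyv.le.trans hvle
      exact_mod_cast this
    have hφ0 : φ (y 0) ≤ 0 := (le_max_left _ _).trans hmax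
    have hsup : (⨆ θ : Icc (0:ℝ) s, ϕ (y θ)) ≤ 0 := (le_max_right _ _).trans hmax
    -- boundedness of the range
    have hbdd : BddAbove (Set.range fun θ : Icc (0:ℝ) s => ϕ (y θ)) := by
      have hcomp : IsCompact ((ϕ ∘ y) '' Icc (0:ℝ) s) :=
        isCompact_Icc.image_of_continuousOn (hϕc.comp_continuousOn (hcont y hy))
      have : (Set.range fun θ : Icc (0:ℝ) s => ϕ (y θ)) = (ϕ ∘ y) '' Icc (0:ℝ) s := by
        ext x
        simp [Set.mem_image]
      rw [this]
      exact hcomp.bddAbove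
    have hadm : ∀ θ ∈ Icc (0:ℝ) s, y θ ∈ K := by
      intro θ hθ
      have : ϕ (y θ) ≤ ⨆ θ : Icc (0:ℝ) s, ϕ (y θ) := le_ciSup hbdd ⟨θ, hθ⟩
      exact (hϕK _).1 (this.trans hsup)
    have hle : v₀ ≤ ((φ (y 0) : ℝ) : EReal) := by
      rw [hv₀]
      exact iInf₂_le y ⟨hy, hadm⟩
    refine hle.trans ?_
    exact_mod_cast hφ0
  · intro hv₀le
    by_contra hpos
    push_neg at hpos
    have hlt : v₀ < v := lt_of_le_of_lt hv₀le hpos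
    rw [hv₀] at hlt
    rw [iInf_lt_iff] at hlt
    obtain ⟨y, hy⟩ := hlt
    rw [iInf_lt_iff] at hy
    obtain ⟨⟨hyS, hyK⟩, hφlt⟩ := hy
    have hsup : (⨆ θ : Icc (0:ℝ) s, ϕ (y θ)) ≤ 0 := by
      apply ciSup_le
      intro θ
      exact (hϕK _).2 (hyK θ θ.2)
    have hvle : v ≤ ((max (φ (y 0)) (⨆ θ : Icc (0:ℝ) s, ϕ (y θ)) : ℝ) : EReal) := by
      rw [hv]
      exact iInf₂_le y hyS
    have hmaxlt : ((max (φ (y 0)) (⨆ θ : Icc (0:ℝ) s, ϕ (y θ)) : ℝ) : EReal) < v := by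
      rw [EReal.coe_strictMono.monotone.map_max]
      apply max_lt hφlt
      refine lt_of_le_of_lt ?_ hpos
      exact_mod_cast hsup
    exact absurd (hvle.trans_lt hmaxlt) (lt_irrefl v)
end

section
/- Let Ω be a metric space, w : Ω → ℝ upper semicontinuous and bounded, ψ : Ω → ℝ continuous and bounded. Suppose (z₀) is a strict maximum point of w − ψ and (z_ε, ζ_ε) are maximizers of the doubled functional Φ_ε(z,ζ) = w(z) − w'(ζ) − ψ(z) − d(z,ζ)²/(2ε) with w' lower semicontinuous bounded and w − w' − ψ having strict maximum at z₀ on a compact set. Then along a subsequence, (z_ε, ζ_ε) → (z₀, z₀) as ε → 0. -/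
/-!
Write `Φ(z, ζ) = w z - w' ζ - ψ z`, an upper semicontinuous function on `Ω × Ω`, bounded above
by some `C` on the compact set `S × S`. Comparing the maximum of the penalized functional
`Φ - d²/(2ε)` with its value at `(z₀, z₀)` gives `Φ(z₀, z₀) + d(z_ε, ζ_ε)²/(2ε) ≤ Φ(z_ε, ζ_ε)`,
so `d(z_ε, ζ_ε)² ≤ 2ε (C - Φ(z₀, z₀)) → 0`. By compactness a subsequence converges, necessarily
to a diagonal point `(p, p)`; upper semicontinuity passes `Φ(z₀, z₀) ≤ Φ(z_ε, ζ_ε)` to the limit,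
and strictness of the maximum forces `p = z₀`.
-/

open Filter Topology Set

theorem UpperSemicontinuous.sub_lowerSemicontinuous {α γ : Type*} [TopologicalSpace α]
    [AddCommGroup γ] [LinearOrder γ] [IsOrderedAddMonoid γ] [TopologicalSpace γ]
    [OrderTopology γ] {f g : α → γ} (hf : UpperSemicontinuous f) (hg : LowerSemicontinuous g) :
    UpperSemicontinuous fun x => f x - g x := by
  simpa only [sub_eq_add_neg, Function.comp_apply] using
    hf.add (continuous_neg.comp_lowerSemicontinuous_antitone hg fun _ _ => neg_le_neg)

section Penalization

variable {Ω : Type*} [MetricSpace Ω]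

noncomputable def penalize (Φ : Ω × Ω → ℝ) (ε : ℝ) (x : Ω × Ω) : ℝ :=
  Φ x - dist x.1 x.2 ^ 2 / (2 * ε)

variable {S : Set Ω} {Φ : Ω × Ω → ℝ}

theorem add_dist_sq_div_le_of_isMaxOn_penalize {ε : ℝ} {z₀ : Ω} {x : Ω × Ω} (hz₀ : z₀ ∈ S)
    (hmax : IsMaxOn (penalize Φ ε) (S ×ˢ S) x) :
    Φ (z₀, z₀) + dist x.1 x.2 ^ 2 / (2 * ε) ≤ Φ x := by
  have h := isMaxOn_iff.mp hmax _ (mk_mem_prod hz₀ hz₀)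
  simp only [penalize, dist_self, ne_eq, OfNat.ofNat_ne_zero, not_false_eq_true, zero_pow,
    zero_div, sub_zero] at h
  linarith

theorem tendsto_dist_of_isMaxOn_penalize (hS : IsCompact S) (hΦ : UpperSemicontinuous Φ)
    {ε : ℕ → ℝ} (hε : ∀ n, 0 < ε n) (hε₀ : Tendsto ε atTop (𝓝 0)) {x : ℕ → Ω × Ω}
    (hxS : ∀ n, x n ∈ S ×ˢ S) (hmax : ∀ n, IsMaxOn (penalize Φ (ε n)) (S ×ˢ S) (x n)) :
    Tendsto (fun n => dist (x n).1 (x n).2) atTop (𝓝 0) := by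
  obtain ⟨C, hC⟩ := (hΦ.upperSemicontinuousOn _).bddAbove_of_isCompact (hS.prod hS)
  set z₀ := (x 0).1
  have hz₀ : z₀ ∈ S := (hxS 0).1
  have hsq : ∀ n, dist (x n).1 (x n).2 ^ 2 ≤ 2 * ε n * (C - Φ (z₀, z₀)) := fun n => by
    have hΦC : Φ (x n) ≤ C := hC (mem_image_of_mem Φ (hxS n))
    have := add_dist_sq_div_le_of_isMaxOn_penalize hz₀ (hmax n)
    rw [← div_le_iff₀' (by linarith [hε n])]
    linarith
  have hbound : Tendsto (fun n => 2 * ε n * (C - Φ (z₀, z₀))) atTop (𝓝 0) := by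
    simpa using (hε₀.const_mul 2).mul_const (C - Φ (z₀, z₀))
  simpa [Real.sqrt_sq dist_nonneg] using (squeeze_zero (fun n => sq_nonneg _) hsq hbound).sqrt

theorem exists_subseq_tendsto_of_isMaxOn_penalize (hS : IsCompact S)
    (hΦ : UpperSemicontinuous Φ) {z₀ : Ω} (hz₀ : z₀ ∈ S)
    (hstrict : ∀ z ∈ S, z ≠ z₀ → Φ (z, z) < Φ (z₀, z₀))
    {ε : ℕ → ℝ} (hε : ∀ n, 0 < ε n) (hε₀ : Tendsto ε atTop (𝓝 0)) {x : ℕ → Ω × Ω}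
    (hxS : ∀ n, x n ∈ S ×ˢ S) (hmax : ∀ n, IsMaxOn (penalize Φ (ε n)) (S ×ˢ S) (x n)) :
    ∃ φ : ℕ → ℕ, StrictMono φ ∧ Tendsto (x ∘ φ) atTop (𝓝 (z₀, z₀)) := by
  obtain ⟨⟨p, q⟩, ⟨hp, -⟩, φ, hφ, hconv⟩ := (hS.prod hS).tendsto_subseq hxS
  have hfst : Tendsto (fun n => (x (φ n)).1) atTop (𝓝 p) :=
    (continuous_fst.tendsto _).comp hconv
  have hsnd : Tendsto (fun n => (x (φ n)).2) atTop (𝓝 p) := hfst.congr_dist <|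
    (tendsto_dist_of_isMaxOn_penalize hS hΦ hε hε₀ hxS hmax).comp hφ.tendsto_atTop
  have hdiag : Tendsto (x ∘ φ) atTop (𝓝 (p, p)) := hfst.prodMk_nhds hsnd
  have hle : Φ (z₀, z₀) ≤ Φ (p, p) := (hΦ.isClosed_preimage _).mem_of_tendsto hdiag <|
    Eventually.of_forall fun n => le_of_add_le_of_nonneg_left
      (add_dist_sq_div_le_of_isMaxOn_penalize hz₀ (hmax (φ n)))
      (div_nonneg (sq_nonneg _) (by linarith [hε (φ n)]))
  obtain rfl : p = z₀ := by
    by_contra hne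
    exact (hstrict p hp hne).not_ge hle
  exact ⟨φ, hφ, hdiag⟩

end Penalization

theorem doubled_maximizers_converge_general {Ω : Type*} [MetricSpace Ω]
    (S : Set Ω) (hS : IsCompact S)
    (w w' ψ : Ω → ℝ)
    (hw : UpperSemicontinuous w) (hw' : LowerSemicontinuous w')
    (hψc : Continuous ψ)
    (z₀ : Ω) (hz₀ : z₀ ∈ S)
    (hstrict : ∀ z ∈ S, z ≠ z₀ → w z - w' z - ψ z < w z₀ - w' z₀ - ψ z₀)
    (z ζ : ℝ → Ω) (hzS : ∀ ε > (0:ℝ), z ε ∈ S ∧ ζ ε ∈ S)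
    (hmax : ∀ ε > (0:ℝ), ∀ p ∈ S, ∀ p' ∈ S,
      w p - w' p' - ψ p - (dist p p')^2 / (2*ε) ≤
        w (z ε) - w' (ζ ε) - ψ (z ε) - (dist (z ε) (ζ ε))^2 / (2*ε)) :
    ∃ εs : ℕ → ℝ, (∀ n, 0 < εs n) ∧ Tendsto εs atTop (𝓝 0) ∧
      Tendsto (fun n => (z (εs n), ζ (εs n))) atTop (𝓝 (z₀, z₀)) := by
  set Φ : Ω × Ω → ℝ := fun x => w x.1 - w' x.2 - ψ x.1
  have hΦ : UpperSemicontinuous Φ :=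
    UpperSemicontinuous.sub_lowerSemicontinuous
      ((hw.comp continuous_fst).sub_lowerSemicontinuous (hw'.comp continuous_snd))
      (hψc.comp continuous_fst).lowerSemicontinuous
  set ε : ℕ → ℝ := fun n => 1 / (n + 1)
  have hε : ∀ n, 0 < ε n := fun n => by positivity
  have hε₀ : Tendsto ε atTop (𝓝 0) := tendsto_one_div_add_atTop_nhds_zero_nat
  obtain ⟨φ, hφ, hconv⟩ := exists_subseq_tendsto_of_isMaxOn_penalize hS hΦ hz₀ hstrict hε hε₀
    (x := fun n => (z (ε n), ζ (ε n))) (fun n => hzS _ (hε n))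
    (fun n y hy => hmax _ (hε n) y.1 hy.1 y.2 hy.2)
  exact ⟨ε ∘ φ, fun n => hε _, hε₀.comp hφ.tendsto_atTop, hconv⟩

/-- Convergence of doubled-variable maximizers to a strict maximum point: if
`w` is u.s.c. bounded, `w'` is l.s.c. bounded, `ψ` is continuous and bounded,
`w - w' - ψ` has a strict maximum over a compact set `S` at `z₀`, and
`(z_ε, ζ_ε) ∈ S × S` maximize `Φ_ε(z,ζ) = w(z) - w'(ζ) - ψ(z) - d(z,ζ)²/(2ε)`
over `S × S`, then along a subsequence `ε_n → 0⁺`, `(z_{ε_n}, ζ_{ε_n}) → (z₀, z₀)`. -/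
theorem doubled_maximizers_converge {Ω : Type*} [MetricSpace Ω]
    (S : Set Ω) (hS : IsCompact S)
    (w w' ψ : Ω → ℝ)
    (hw : UpperSemicontinuous w) (hw' : LowerSemicontinuous w')
    (hψc : Continuous ψ)
    (Cw Cw' Cψ : ℝ) (hwb : ∀ z, |w z| ≤ Cw) (hw'b : ∀ z, |w' z| ≤ Cw')
    (hψb : ∀ z, |ψ z| ≤ Cψ)
    (z₀ : Ω) (hz₀ : z₀ ∈ S)
    (hstrict : ∀ z ∈ S, z ≠ z₀ → w z - w' z - ψ z < w z₀ - w' z₀ - ψ z₀)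
    (z ζ : ℝ → Ω) (hzS : ∀ ε > (0:ℝ), z ε ∈ S ∧ ζ ε ∈ S)
    (hmax : ∀ ε > (0:ℝ), ∀ p ∈ S, ∀ p' ∈ S,
      w p - w' p' - ψ p - (dist p p')^2 / (2*ε) ≤
        w (z ε) - w' (ζ ε) - ψ (z ε) - (dist (z ε) (ζ ε))^2 / (2*ε)) :
    ∃ εs : ℕ → ℝ, (∀ n, 0 < εs n) ∧ Tendsto εs atTop (𝓝 0) ∧
      Tendsto (fun n => (z (εs n), ζ (εs n))) atTop (𝓝 (z₀, z₀)) :=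
  doubled_maximizers_converge_general S hS w w' ψ hw hw' hψc z₀ hz₀ hstrict z ζ hzS hmax
end

section
/- Suppose u₁, u₂ : Ω → ℝ satisfy, at every point of the switching boundary ∂Ω|_P, u₁ ≤ M⁺u₁ and u₂ ≥ M⁻u₂, where (M⁺u)(x,q,0,s) = inf_{w ∈ W(q), p' ≥ δ} u*(x, g(w,q), p', s) and similarly for M⁻ with lower envelopes. If u₁ ≤ u₂ holds at all points (x, q, p, s) with p ≥ δ > 0, then u₁ ≤ u₂ on the switching boundary { p = 0 }. -/
open Filter Set

variable {d : ℕ} {Q : Type*}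

/-- Upper envelope in the continuous variables `(x,p,s)` for fixed mode `q`. -/
noncomputable def uStar (u : EuclideanSpace ℝ (Fin d) → Q → ℝ → ℝ → ℝ)
    (x : EuclideanSpace ℝ (Fin d)) (q : Q) (p s : ℝ) : ℝ :=
  limsup (fun z : EuclideanSpace ℝ (Fin d) × ℝ × ℝ => u z.1 q z.2.1 z.2.2)
    (nhds (x, p, s))

/-- Lower envelope in the continuous variables `(x,p,s)` for fixed mode `q`. -/
noncomputable def uLow (u : EuclideanSpace ℝ (Fin d) → Q → ℝ → ℝ → ℝ)
    (x : EuclideanSpace ℝ (Fin d)) (q : Q) (p s : ℝ) : ℝ :=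
  liminf (fun z : EuclideanSpace ℝ (Fin d) × ℝ × ℝ => u z.1 q z.2.1 z.2.2)
    (nhds (x, p, s))

/-- Switch operator with upper envelopes: `M⁺u(x,q,0,s) = inf_{w ∈ W(q), p' ≥ δ} u*(x,g(w,q),p',s)`. -/
noncomputable def Mplus (W : Q → Set Q) (g : Q → Q → Q) (δ : ℝ)
    (u : EuclideanSpace ℝ (Fin d) → Q → ℝ → ℝ → ℝ)
    (x : EuclideanSpace ℝ (Fin d)) (q : Q) (s : ℝ) : ℝ :=
  ⨅ (w : W q) (p' : {p : ℝ // δ ≤ p}), uStar u x (g w q) p' s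

/-- Switch operator with lower envelopes. -/
noncomputable def Mminus (W : Q → Set Q) (g : Q → Q → Q) (δ : ℝ)
    (u : EuclideanSpace ℝ (Fin d) → Q → ℝ → ℝ → ℝ)
    (x : EuclideanSpace ℝ (Fin d)) (q : Q) (s : ℝ) : ℝ :=
  ⨅ (w : W q) (p' : {p : ℝ // δ ≤ p}), uLow u x (g w q) p' s


lemma usc_limsup_le {X : Type*} [TopologicalSpace X] {f : X → ℝ} {C : ℝ}
    (hf : UpperSemicontinuous f) (hb : ∀ x, |f x| ≤ C) (z : X) :
    limsup f (nhds z) ≤ f z := by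
  have hcob : (nhds z).IsCoboundedUnder (· ≤ ·) f :=
    isCoboundedUnder_le_of_le _ fun x => neg_le_of_abs_le (hb x)
  refine le_of_forall_pos_le_add fun ε hε => ?_
  refine limsup_le_of_le hcob ?_
  filter_upwards [hf z (f z + ε) (by linarith)] with x hx using hx.le

lemma lsc_le_liminf {X : Type*} [TopologicalSpace X] {f : X → ℝ} {C : ℝ}
    (hf : LowerSemicontinuous f) (hb : ∀ x, |f x| ≤ C) (z : X) :
    f z ≤ liminf f (nhds z) := by
  have hbdd : (nhds z).IsCoboundedUnder (· ≥ ·) f :=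
    isCoboundedUnder_ge_of_le _ fun x => le_of_abs_le (hb x)
  refine le_of_forall_pos_le_add fun ε hε => ?_
  rw [← sub_le_iff_le_add]
  refine le_liminf_of_le hbdd ?_
  filter_upwards [hf z (f z - ε) (by linarith)] with x hx using hx.le


lemma neg_le_limsup_of_abs_le {X : Type*} [TopologicalSpace X] {f : X → ℝ} {C : ℝ}
    (hb : ∀ x, |f x| ≤ C) (z : X) : -C ≤ limsup f (nhds z) :=
  le_limsup_of_frequently_le
    ((Eventually.of_forall fun x : X => neg_le_of_abs_le (hb x)).frequently)
    (isBoundedUnder_of ⟨C, fun x : X => le_of_abs_le (hb x)⟩)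

lemma neg_le_liminf_of_abs_le {X : Type*} [TopologicalSpace X] {f : X → ℝ} {C : ℝ}
    (hb : ∀ x, |f x| ≤ C) (z : X) : -C ≤ liminf f (nhds z) :=
  le_liminf_of_le (isCoboundedUnder_ge_of_le _ fun x => le_of_abs_le (hb x))
    (Eventually.of_forall fun x => neg_le_of_abs_le (hb x))

set_option maxHeartbeats 1000000 in
/-- Boundary case of the comparison principle: if `u₁ ≤ M⁺u₁` and `M⁻u₂ ≤ u₂` on the
switching boundary `p = 0`, and `u₁ ≤ u₂` at all points with lock value `p ≥ δ > 0`,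
then `u₁ ≤ u₂` on the switching boundary. -/
theorem comparison_on_switching_boundary
    (W : Q → Set Q) (hW : ∀ q, (W q).Nonempty) (g : Q → Q → Q) (δ : ℝ) (hδ : 0 < δ)
    (u₁ u₂ : EuclideanSpace ℝ (Fin d) → Q → ℝ → ℝ → ℝ)
    (C : ℝ) (hb₁ : ∀ x q p s, |u₁ x q p s| ≤ C) (hb₂ : ∀ x q p s, |u₂ x q p s| ≤ C)
    (husc : ∀ q, UpperSemicontinuous
        (fun z : EuclideanSpace ℝ (Fin d) × ℝ × ℝ => u₁ z.1 q z.2.1 z.2.2))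
    (hlsc : ∀ q, LowerSemicontinuous
        (fun z : EuclideanSpace ℝ (Fin d) × ℝ × ℝ => u₂ z.1 q z.2.1 z.2.2))
    (hsub : ∀ x q s, u₁ x q 0 s ≤ Mplus W g δ u₁ x q s)
    (hsup : ∀ x q s, Mminus W g δ u₂ x q s ≤ u₂ x q 0 s)
    (hinterior : ∀ x q p s, δ ≤ p → u₁ x q p s ≤ u₂ x q p s) :
    ∀ x q s, u₁ x q 0 s ≤ u₂ x q 0 s := by
  intro x q s
  refine (hsub x q s).trans (le_trans ?_ (hsup x q s))
  unfold Mplus Mminus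
  haveI : Nonempty (W q) := (hW q).to_subtype
  have hS : ∀ q' (p' : ℝ), -C ≤ uStar u₁ x q' p' s := fun q' p' =>
    neg_le_limsup_of_abs_le
      (fun z : EuclideanSpace ℝ (Fin d) × ℝ × ℝ => hb₁ z.1 q' z.2.1 z.2.2) (x, p', s)
  refine le_ciInf fun w => le_ciInf fun p' => ?_
  have hbd1 : BddBelow (Set.range fun p'' : {p : ℝ // δ ≤ p} => uStar u₁ x (g w q) p'' s) :=
    ⟨-C, by rintro a ⟨p'', rfl⟩; exact hS _ p''⟩
  have hbd2 : BddBelow (Set.range fun w' : W q =>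
      ⨅ p'' : {p : ℝ // δ ≤ p}, uStar u₁ x (g w' q) p'' s) :=
    ⟨-C, by rintro a ⟨w', rfl⟩; exact le_ciInf fun p'' => hS _ p''⟩
  have h1 : (⨅ (w : W q) (p' : {p : ℝ // δ ≤ p}), uStar u₁ x (g w q) p' s)
      ≤ uStar u₁ x (g w q) p' s :=
    le_trans (ciInf_le hbd2 w) (ciInf_le hbd1 p')
  refine h1.trans ?_
  calc uStar u₁ x (g w q) p' s ≤ u₁ x (g w q) p' s :=
        usc_limsup_le (husc (g w q)) (fun z : EuclideanSpace ℝ (Fin d) × ℝ × ℝ => hb₁ z.1 _ z.2.1 z.2.2) (x, (p' : ℝ), s)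
    _ ≤ u₂ x (g w q) p' s := hinterior x (g w q) p' s p'.2
    _ ≤ uLow u₂ x (g w q) p' s :=
        lsc_le_liminf (hlsc (g w q)) (fun z : EuclideanSpace ℝ (Fin d) × ℝ × ℝ => hb₂ z.1 _ z.2.1 z.2.2) (x, (p' : ℝ), s)
end
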